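/- arXiv:2601.02325 — 6 statements merged into one kernel-verified Lean document; each statement's English description precedes it below -/
import Mathlib

section
/- If γ : [0,1] → ℝ³ is an injective continuous path and β : [0,1] → ℝ³ is a continuous path with the same endpoints whose image contains the image of γ (β([0,1]) ⊇ γ([0,1])), then length(β) ≥ length(γ). -/
/-!
Both lengths are compared with the one-dimensional Hausdorff measure of the images.
Reparametrizing a curve of finite length by arc length exhibits its image as a 1-Lipschitz
image of a set of diameter at most the length, so `μH[1]` of the image is at most the length.
Conversely, along an injective continuous curve the images of the intervals of a partition
overlap only in single points, and each one has `μH[1]` at least the distance between its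
endpoints, because `dist x` maps it 1-Lipschitz onto an interval of that length.
-/

open Set Function MeasureTheory Metric

theorem hausdorffMeasure_image_le_eVariationOn {E : Type*} [EMetricSpace E]
    [MeasurableSpace E] [BorelSpace E] (f : ℝ → E) (s : Set ℝ) :
    μH[1] (f '' s) ≤ eVariationOn f s := by
  rcases eq_or_ne (eVariationOn f s) ⊤ with hV | hV
  · simp [hV]
  rcases s.eq_empty_or_nonempty with rfl | ⟨a, ha⟩
  · simp
  have hf : LocallyBoundedVariationOn f s :=
    BoundedVariationOn.locallyBoundedVariationOn hV
  set φ := variationOnFromTo f s a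
  set g := naturalParameterization f s a
  have hfg : f '' s = g '' (φ '' s) := by
    rw [image_image]
    refine image_congr fun b hb => ?_
    exact (edist_eq_zero.1 (edist_naturalParameterization_eq_zero hf ha hb)).symm
  have hg : LipschitzOnWith 1 g (φ '' s) := by
    intro x hx y hy
    rw [ENNReal.coe_one, one_mul]
    wlog hxy : x ≤ y generalizing x y
    · rw [edist_comm, edist_comm x]; exact this hy hx (le_of_not_ge hxy)
    calc edist (g x) (g y) ≤ eVariationOn g (φ '' s ∩ Icc x y) :=
          eVariationOn.edist_le g ⟨hx, le_rfl, hxy⟩ ⟨hy, hxy, le_rfl⟩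
      _ = edist x y := by
          rw [has_unit_speed_naturalParameterization f hf ha hx hy, NNReal.coe_one, one_mul,
            edist_dist, Real.dist_eq, abs_sub_comm, abs_of_nonneg (sub_nonneg.2 hxy)]
  have hφ : ediam (φ '' s) ≤ eVariationOn f s := by
    refine ediam_le fun _ ⟨b, hb, hφb⟩ _ ⟨c, hc, hφc⟩ => ?_
    rw [← hφb, ← hφc, edist_dist, Real.dist_eq, variationOnFromTo.sub_right hf ha hb hc,
      ← ENNReal.ofReal_toReal hV]
    exact ENNReal.ofReal_le_ofReal (variationOnFromTo.abs_le_eVariationOn hV)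
  calc μH[1] (f '' s) = μH[1] (g '' (φ '' s)) := by rw [hfg]
    _ ≤ μH[1] (φ '' s) := by simpa using hg.hausdorffMeasure_image_le zero_le_one
    _ ≤ ediam (φ '' s) := by rw [hausdorffMeasure_real]; exact Real.volume_le_diam _
    _ ≤ eVariationOn f s := hφ

theorem edist_le_hausdorffMeasure_of_isPreconnected {X : Type*} [MetricSpace X]
    [MeasurableSpace X] [BorelSpace X] {s : Set X} (hs : IsPreconnected s) {x y : X}
    (hx : x ∈ s) (hy : y ∈ s) : edist x y ≤ μH[1] s := by
  have hIcc : Icc 0 (dist x y) ⊆ dist x '' s := by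
    simpa using (hs.image (dist x) (continuous_const.dist continuous_id).continuousOn).Icc_subset
      (mem_image_of_mem _ hx) (mem_image_of_mem _ hy)
  calc edist x y = volume (Icc 0 (dist x y)) := by rw [Real.volume_Icc, sub_zero, edist_dist]
    _ ≤ μH[1] (dist x '' s) := by rw [hausdorffMeasure_real]; exact measure_mono hIcc
    _ ≤ μH[1] s := by
      simpa using (LipschitzWith.dist_right x).hausdorffMeasure_image_le zero_le_one s

theorem Monotone.Icc_inter_Icc_succ_subsingleton {α : Type*} [LinearOrder α] {u : ℕ → α}
    (hu : Monotone u) {i j : ℕ} (hij : i ≠ j) :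
    (Icc (u i) (u (i + 1)) ∩ Icc (u j) (u (j + 1))).Subsingleton := by
  wlog hlt : i < j generalizing i j
  · rw [inter_comm]; exact this hij.symm (hij.lt_or_gt.resolve_left hlt)
  have hle : u (i + 1) ≤ u j := hu hlt
  rintro x ⟨⟨-, hxi⟩, ⟨hxj, -⟩⟩ y ⟨⟨-, hyi⟩, ⟨hyj, -⟩⟩
  exact le_antisymm (hxi.trans (hle.trans hyj)) (hyi.trans (hle.trans hxj))

theorem eVariationOn_le_hausdorffMeasure_image {X : Type*} [MetricSpace X]
    [MeasurableSpace X] [BorelSpace X] {f : ℝ → X} {s : Set ℝ} (hs : s.OrdConnected)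
    (hf : ContinuousOn f s) (hinj : InjOn f s) : eVariationOn f s ≤ μH[1] (f '' s) := by
  have := Measure.nullSingletonClass_hausdorff X one_pos
  refine iSup_le fun ⟨n, u, hu, us⟩ => ?_
  set P : ℕ → Set X := fun i => f '' Icc (u i) (u (i + 1))
  have hPs (i : ℕ) : Icc (u i) (u (i + 1)) ⊆ s := hs.out (us i) (us (i + 1))
  have hedist (i : ℕ) : edist (f (u (i + 1))) (f (u i)) ≤ μH[1] (P i) := by
    rw [edist_comm]
    exact edist_le_hausdorffMeasure_of_isPreconnected
      (isPreconnected_Icc.image f (hf.mono (hPs i)))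
      (mem_image_of_mem f (left_mem_Icc.2 (hu i.le_succ)))
      (mem_image_of_mem f (right_mem_Icc.2 (hu i.le_succ)))
  have hmeas (i : ℕ) : NullMeasurableSet (P i) μH[1] :=
    (isCompact_Icc.image_of_continuousOn (hf.mono (hPs i))).isClosed.measurableSet
      |>.nullMeasurableSet
  have hdisj : (Finset.range n : Set ℕ).Pairwise (AEDisjoint μH[1] on P) := by
    intro i _ j _ hij
    change μH[1] (f '' _ ∩ f '' _) = 0
    rw [← hinj.image_inter (hPs i) (hPs j)]
    exact ((hu.Icc_inter_Icc_succ_subsingleton hij).image f).measure_zero _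
  calc ∑ i ∈ Finset.range n, edist (f (u (i + 1))) (f (u i))
      ≤ ∑ i ∈ Finset.range n, μH[1] (P i) := Finset.sum_le_sum fun i _ => hedist i
    _ = μH[1] (⋃ i ∈ Finset.range n, P i) :=
        (measure_biUnion_finset₀ hdisj fun i _ => hmeas i).symm
    _ ≤ μH[1] (f '' s) := measure_mono <| iUnion₂_subset fun i _ => image_mono (hPs i)

theorem length_ge_of_image_superset_general
    (γ β : ℝ → EuclideanSpace ℝ (Fin 3))
    (hγcont : ContinuousOn γ (Icc 0 1))
    (hγinj : InjOn γ (Icc 0 1))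
    (himg : γ '' Icc 0 1 ⊆ β '' Icc 0 1) :
    eVariationOn γ (Icc 0 1) ≤ eVariationOn β (Icc 0 1) :=
  calc eVariationOn γ (Icc 0 1)
      ≤ μH[1] (γ '' Icc 0 1) :=
        eVariationOn_le_hausdorffMeasure_image ordConnected_Icc hγcont hγinj
    _ ≤ μH[1] (β '' Icc 0 1) := measure_mono himg
    _ ≤ eVariationOn β (Icc 0 1) := hausdorffMeasure_image_le_eVariationOn β (Icc 0 1)

/-- If `γ : [0,1] → ℝ³` is an injective continuous path and `β : [0,1] → ℝ³` is a continuous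
path with the same endpoints whose image contains the image of `γ`, then
`length β ≥ length γ` (length = variation = sup over partitions of sums of distances). -/
theorem length_ge_of_image_superset
    (γ β : ℝ → EuclideanSpace ℝ (Fin 3))
    (hγcont : ContinuousOn γ (Icc 0 1))
    (hγinj : InjOn γ (Icc 0 1))
    (hβcont : ContinuousOn β (Icc 0 1))
    (h0 : β 0 = γ 0) (h1 : β 1 = γ 1)
    (himg : γ '' Icc 0 1 ⊆ β '' Icc 0 1) :
    eVariationOn γ (Icc 0 1) ≤ eVariationOn β (Icc 0 1) :=
  length_ge_of_image_superset_general γ β hγcont hγinj himg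
end

section
/- Hemisphere lemma: any closed curve on the unit sphere S² of length less than 2π is contained in an open hemisphere; that is, there exists a unit vector z with ⟨z, γ(t)⟩ > 0 for all t. -/
/-!
Cut the curve at a point `c` that halves its length and put `p = γ a = γ b`, `q = γ c`.
A curve on the unit sphere is at least as long as the angle `θ` between its endpoints:
splitting off an initial arc subtending `θ / n` and inducting gives length `≥ 2n sin (θ / 2n)`,
which tends to `θ`.
Hence each half, of length `< π`, stays inside the open hemisphere centred at `p + q`:
a half that met the great circle `⟪p + q, ·⟫ = 0` at some `x` would have length at least
`∠(p, x) + ∠(x, q) = π`.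
-/

open Set Real Filter Topology InnerProductGeometry
open scoped RealInnerProductSpace

section Angle

variable {F : Type*} [NormedAddCommGroup F] [InnerProductSpace ℝ F]

theorem norm_sub_eq_two_mul_sin_angle_div_two {x y : F} (h : ‖x‖ = ‖y‖) :
    ‖x - y‖ = 2 * ‖x‖ * sin (angle x y / 2) := by
  have hsin : 0 ≤ sin (angle x y / 2) :=
    sin_nonneg_of_nonneg_of_le_pi (by linarith [angle_nonneg x y])
      (by linarith [angle_le_pi x y, pi_pos])
  have hcos : cos (angle x y) = 1 - 2 * sin (angle x y / 2) ^ 2 := by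
    have h2 := Real.cos_two_mul (angle x y / 2)
    rw [mul_div_cancel₀ _ two_ne_zero, cos_sq'] at h2
    linarith
  have hsq : ‖x - y‖ ^ 2 = (2 * ‖x‖ * sin (angle x y / 2)) ^ 2 := by
    rw [sq, norm_sub_sq_eq_norm_sq_add_norm_sq_sub_two_mul_norm_mul_norm_mul_cos_angle, ← h, hcos]
    ring
  exact (pow_left_inj₀ (norm_nonneg _) (by positivity) two_ne_zero).1 hsq

theorem angle_add_angle_eq_pi_of_inner_add_eq_zero {x y w : F} (hxy : ‖x‖ = ‖y‖)
    (h : ⟪x + y, w⟫ = 0) : angle x w + angle w y = π := by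
  have hx : ⟪x, w⟫ = -⟪y, w⟫ := by rw [inner_add_left] at h; linarith
  rw [angle_comm w y]
  unfold angle
  rw [hx, hxy, neg_div, arccos_neg]
  ring

end Angle

section Variation

theorem eVariationOn_Icc_add_Icc {α E : Type*} [LinearOrder α] [PseudoEMetricSpace E]
    (f : α → E) {a b c : α} (hab : a ≤ b) (hbc : b ≤ c) :
    eVariationOn f (Icc a b) + eVariationOn f (Icc b c) = eVariationOn f (Icc a c) := by
  simpa only [univ_inter] using eVariationOn.Icc_add_Icc f hab hbc (mem_univ b)

theorem continuousOn_variationOnFromTo {α E : Type*} [LinearOrder α] [TopologicalSpace α]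
    [OrderTopology α] [PseudoMetricSpace E] {f : α → E} {s : Set α}
    (hf : LocallyBoundedVariationOn f s) (hcont : ContinuousOn f s) {a : α} (ha : a ∈ s) :
    ContinuousOn (variationOnFromTo f s a) s := by
  intro x hx
  have hleft := variationOnFromTo.tendsto_left ha hx hf ((hcont x hx).mono inter_subset_left)
  have hright := variationOnFromTo.tendsto_right ha hx hf ((hcont x hx).mono inter_subset_left)
  rw [dist_self, sub_zero] at hleft
  rw [dist_self, add_zero] at hright
  refine (continuousWithinAt_insert_self.2 (ContinuousWithinAt.union hleft hright)).mono ?_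
  intro y hy
  rcases lt_trichotomy y x with h | rfl | h <;> simp [*]

theorem exists_eVariationOn_Icc_eq {E : Type*} [PseudoMetricSpace E] {f : ℝ → E} {a b : ℝ}
    (hab : a ≤ b) (hf : ContinuousOn f (Icc a b)) (hfin : eVariationOn f (Icc a b) ≠ ⊤) :
    ∃ c ∈ Icc a b, eVariationOn f (Icc a c) = eVariationOn f (Icc c b) := by
  have hbv : LocallyBoundedVariationOn f (Icc a b) :=
    BoundedVariationOn.locallyBoundedVariationOn hfin
  have ha : a ∈ Icc a b := left_mem_Icc.2 hab
  have hb : b ∈ Icc a b := right_mem_Icc.2 hab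
  set φ := variationOnFromTo f (Icc a b) a
  have hφb : 0 ≤ φ b := variationOnFromTo.nonneg_of_le _ _ hab
  obtain ⟨c, hc, hφc⟩ : ∃ c ∈ Icc a b, φ c = φ b / 2 :=
    intermediate_value_Icc hab (continuousOn_variationOnFromTo hbv hf ha)
      ⟨by rw [variationOnFromTo.self]; linarith, by linarith⟩
  refine ⟨c, hc, ?_⟩
  have hsplit : φ c = variationOnFromTo f (Icc a b) c b := by
    linarith [variationOnFromTo.add hbv ha hc hb]
  rw [show φ c = _ from variationOnFromTo.eq_of_le _ _ hc.1, variationOnFromTo.eq_of_le _ _ hc.2,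
    inter_eq_right.2 (Icc_subset_Icc_right hc.2),
    inter_eq_right.2 (Icc_subset_Icc_left hc.1)] at hsplit
  exact (ENNReal.toReal_eq_toReal_iff'
    (ne_top_of_le_ne_top hfin (eVariationOn.mono f (Icc_subset_Icc_right hc.2)))
    (ne_top_of_le_ne_top hfin (eVariationOn.mono f (Icc_subset_Icc_left hc.1)))).1 hsplit

end Variation

section SphericalCurve

variable {F : Type*} [NormedAddCommGroup F] [InnerProductSpace ℝ F] {f : ℝ → F} {a b : ℝ}

theorem ofReal_two_mul_sin_angle_div_two_le_eVariationOn (hab : a ≤ b) (ha : ‖f a‖ = 1)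
    (hb : ‖f b‖ = 1) :
    ENNReal.ofReal (2 * sin (angle (f a) (f b) / 2)) ≤ eVariationOn f (Icc a b) := by
  have hchord := norm_sub_eq_two_mul_sin_angle_div_two (ha.trans hb.symm)
  rw [ha, mul_one] at hchord
  rw [← hchord, ← dist_eq_norm, ← edist_dist]
  exact eVariationOn.edist_le f (left_mem_Icc.2 hab) (right_mem_Icc.2 hab)

theorem ContinuousOn.angle_const_left {α : Type*} [TopologicalSpace α] {g : α → F} {s : Set α}
    (hg : ContinuousOn g s) (hs : ∀ t ∈ s, g t ≠ 0) {p : F} (hp : p ≠ 0) :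
    ContinuousOn (fun t ↦ angle p (g t)) s := fun t ht ↦
  (continuousAt_angle (x := (p, g t)) hp (hs t ht)).comp_continuousWithinAt
    (f := fun t ↦ (p, g t)) (continuousWithinAt_const.prodMk (hg t ht))

theorem exists_mem_Icc_angle_eq (hab : a ≤ b) (hf : ContinuousOn f (Icc a b))
    (hne : ∀ t ∈ Icc a b, f t ≠ 0) {φ : ℝ} (hφ₀ : 0 ≤ φ) (hφ : φ ≤ angle (f a) (f b)) :
    ∃ r ∈ Icc a b, angle (f a) (f r) = φ := by
  have ha : f a ≠ 0 := hne a (left_mem_Icc.2 hab)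
  refine intermediate_value_Icc hab (hf.angle_const_left hne ha) ⟨?_, hφ⟩
  rwa [angle_self ha]

theorem ofReal_mul_sin_angle_div_le_eVariationOn (hab : a ≤ b) (hf : ContinuousOn f (Icc a b))
    (hsph : ∀ t ∈ Icc a b, ‖f t‖ = 1) (n : ℕ) :
    ENNReal.ofReal (2 * (n + 1) * sin (angle (f a) (f b) / (2 * (n + 1))))
      ≤ eVariationOn f (Icc a b) := by
  induction n generalizing a with
  | zero =>
    simpa using ofReal_two_mul_sin_angle_div_two_le_eVariationOn hab
      (hsph a (left_mem_Icc.2 hab)) (hsph b (right_mem_Icc.2 hab))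
  | succ n ih =>
    set θ := angle (f a) (f b)
    have ha : ‖f a‖ = 1 := hsph a (left_mem_Icc.2 hab)
    have hθ : 0 ≤ θ := angle_nonneg _ _
    obtain ⟨r, hr, hθr⟩ := exists_mem_Icc_angle_eq hab hf
      (fun t ht ↦ by simp [← norm_ne_zero_iff, hsph t ht]) (φ := θ / (n + 2)) (by positivity)
      (div_le_self hθ (by linarith))
    have hsub : Icc r b ⊆ Icc a b := Icc_subset_Icc_left hr.1
    have hfirst := ofReal_two_mul_sin_angle_div_two_le_eVariationOn hr.1 ha (hsph r hr)
    have hrest := ih hr.2 (hf.mono hsub) fun t ht ↦ hsph t (hsub ht)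
    have htri : θ ≤ angle (f a) (f r) + angle (f r) (f b) := angle_le_angle_add_angle _ _ _
    have hx : 0 ≤ θ / (2 * (n + 2)) := by positivity
    have hxy : θ / (2 * (n + 2)) ≤ angle (f r) (f b) / (2 * (n + 1)) := by
      rw [hθr] at htri
      rw [div_le_div_iff₀ (by positivity) (by positivity)]
      have := mul_le_mul_of_nonneg_right htri (by positivity : (0 : ℝ) ≤ n + 2)
      rw [add_mul, div_mul_cancel₀ _ (by positivity)] at this
      nlinarith
    have hy : angle (f r) (f b) / (2 * (n + 1)) ≤ π / 2 := by
      rw [div_le_iff₀ (by positivity)]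
      nlinarith [angle_le_pi (f r) (f b), pi_pos, (n.cast_nonneg : (0 : ℝ) ≤ n)]
    have hsin : sin (θ / (2 * (n + 2))) ≤ sin (angle (f r) (f b) / (2 * (n + 1))) :=
      sin_le_sin_of_le_of_le_pi_div_two (by linarith [pi_pos]) hy hxy
    have hsin0 : 0 ≤ sin (θ / (2 * (n + 2))) :=
      sin_nonneg_of_nonneg_of_le_pi hx (by linarith [pi_pos])
    rw [hθr, div_div, mul_comm (n + 2 : ℝ) 2] at hfirst
    calc ENNReal.ofReal (2 * ((n + 1 : ℕ) + 1) * sin (θ / (2 * ((n + 1 : ℕ) + 1))))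
        ≤ ENNReal.ofReal (2 * sin (θ / (2 * (n + 2))))
          + ENNReal.ofReal (2 * (n + 1) * sin (angle (f r) (f b) / (2 * (n + 1)))) := by
          rw [← ENNReal.ofReal_add (by positivity) (by have := hsin0.trans hsin; positivity)]
          apply ENNReal.ofReal_le_ofReal
          push_cast
          rw [show (n : ℝ) + 1 + 1 = n + 2 by ring]
          nlinarith
      _ ≤ eVariationOn f (Icc a r) + eVariationOn f (Icc r b) := add_le_add hfirst hrest
      _ = eVariationOn f (Icc a b) := eVariationOn_Icc_add_Icc f hr.1 hr.2

theorem ofReal_angle_le_eVariationOn (hab : a ≤ b) (hf : ContinuousOn f (Icc a b))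
    (hsph : ∀ t ∈ Icc a b, ‖f t‖ = 1) :
    ENNReal.ofReal (angle (f a) (f b)) ≤ eVariationOn f (Icc a b) := by
  set θ := angle (f a) (f b)
  have hN : Tendsto (fun n : ℕ ↦ 2 * ((n : ℝ) + 1)) atTop atTop :=
    (tendsto_natCast_atTop_atTop.atTop_add tendsto_const_nhds).const_mul_atTop two_pos
  have hsinc : Tendsto (fun n : ℕ ↦ θ * sinc (θ / (2 * (n + 1)))) atTop (𝓝 θ) := by
    simpa using ((continuous_sinc.tendsto 0).comp (tendsto_const_nhds.div_atTop hN)).const_mul θ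
  have hlim : Tendsto (fun n : ℕ ↦ 2 * (n + 1) * sin (θ / (2 * (n + 1)))) atTop (𝓝 θ) := by
    refine hsinc.congr fun n ↦ ?_
    rcases eq_or_ne θ 0 with hθ | hθ
    · simp [hθ]
    · rw [sinc_of_ne_zero (by positivity)]
      field_simp
  exact le_of_tendsto' ((ENNReal.continuous_ofReal.tendsto θ).comp hlim)
    (ofReal_mul_sin_angle_div_le_eVariationOn hab hf hsph)

theorem inner_add_pos_of_eVariationOn_lt_pi (hab : a ≤ b) (hf : ContinuousOn f (Icc a b))
    (hsph : ∀ t ∈ Icc a b, ‖f t‖ = 1) (hlen : eVariationOn f (Icc a b) < ENNReal.ofReal π) :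
    ∀ t ∈ Icc a b, 0 < ⟪f a + f b, f t⟫ := by
  have ha : ‖f a‖ = 1 := hsph a (left_mem_Icc.2 hab)
  have hb : ‖f b‖ = 1 := hsph b (right_mem_Icc.2 hab)
  intro t ht
  by_contra! hneg
  have hstart : 0 ≤ ⟪f a + f b, f a⟫ := by
    rw [inner_add_left, real_inner_self_eq_norm_sq, ha]
    nlinarith [neg_le_of_abs_le (abs_real_inner_le_norm (f b) (f a)), ha, hb]
  obtain ⟨r, hr, hr0⟩ : ∃ r ∈ Icc a t, ⟪f a + f b, f r⟫ = 0 :=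
    intermediate_value_Icc' ht.1
      (continuousOn_const.inner (hf.mono (Icc_subset_Icc_right ht.2))) ⟨hneg, hstart⟩
  have hr' : r ∈ Icc a b := ⟨hr.1, hr.2.trans ht.2⟩
  have hsub₁ : Icc a r ⊆ Icc a b := Icc_subset_Icc_right hr'.2
  have hsub₂ : Icc r b ⊆ Icc a b := Icc_subset_Icc_left hr'.1
  have hπ : angle (f a) (f r) + angle (f r) (f b) = π :=
    angle_add_angle_eq_pi_of_inner_add_eq_zero (ha.trans hb.symm) hr0
  refine hlen.not_ge ?_
  calc ENNReal.ofReal π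
      = ENNReal.ofReal (angle (f a) (f r)) + ENNReal.ofReal (angle (f r) (f b)) := by
        rw [← hπ, ENNReal.ofReal_add (angle_nonneg _ _) (angle_nonneg _ _)]
    _ ≤ eVariationOn f (Icc a r) + eVariationOn f (Icc r b) :=
        add_le_add
          (ofReal_angle_le_eVariationOn hr'.1 (hf.mono hsub₁) fun s hs ↦ hsph s (hsub₁ hs))
          (ofReal_angle_le_eVariationOn hr'.2 (hf.mono hsub₂) fun s hs ↦ hsph s (hsub₂ hs))
    _ = eVariationOn f (Icc a b) := eVariationOn_Icc_add_Icc f hr'.1 hr'.2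

end SphericalCurve

/-- Hemisphere lemma: any closed curve on the unit sphere `S²` of length less than `2π`
lies in an open hemisphere: there is a unit vector `z` with `⟪z, γ t⟫ > 0` for all `t`. -/
theorem hemisphere_lemma
    (a b : ℝ) (hab : a ≤ b)
    (γ : ℝ → EuclideanSpace ℝ (Fin 3))
    (hcont : ContinuousOn γ (Icc a b))
    (hclosed : γ a = γ b)
    (hsphere : ∀ t ∈ Icc a b, ‖γ t‖ = 1)
    (hlen : eVariationOn γ (Icc a b) < ENNReal.ofReal (2 * Real.pi)) :
    ∃ z : EuclideanSpace ℝ (Fin 3), ‖z‖ = 1 ∧ ∀ t ∈ Icc a b, 0 < ⟪z, γ t⟫ := by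
  obtain ⟨c, hc, hmid⟩ :=
    exists_eVariationOn_Icc_eq hab hcont (hlen.trans ENNReal.ofReal_lt_top).ne
  have hhalf : eVariationOn γ (Icc a c) < ENNReal.ofReal π := by
    by_contra! h
    rw [← eVariationOn_Icc_add_Icc γ hc.1 hc.2, ← hmid, two_mul,
      ENNReal.ofReal_add pi_pos.le pi_pos.le] at hlen
    exact hlen.not_ge (add_le_add h h)
  have hsub₁ : Icc a c ⊆ Icc a b := Icc_subset_Icc_right hc.2
  have hsub₂ : Icc c b ⊆ Icc a b := Icc_subset_Icc_left hc.1
  have hpos₁ := inner_add_pos_of_eVariationOn_lt_pi hc.1 (hcont.mono hsub₁)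
    (fun t ht ↦ hsphere t (hsub₁ ht)) hhalf
  have hpos₂ := inner_add_pos_of_eVariationOn_lt_pi hc.2 (hcont.mono hsub₂)
    (fun t ht ↦ hsphere t (hsub₂ ht)) (hmid ▸ hhalf)
  rw [← hclosed, add_comm] at hpos₂
  have hz : γ a + γ c ≠ 0 := fun h ↦ by simpa [h] using hpos₁ a (left_mem_Icc.2 hc.1)
  refine ⟨‖γ a + γ c‖⁻¹ • (γ a + γ c), norm_smul_inv_norm hz, fun t ht ↦ ?_⟩
  have hpos : 0 < ⟪γ a + γ c, γ t⟫ :=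
    (le_total t c).elim (fun h ↦ hpos₁ t ⟨ht.1, h⟩) (fun h ↦ hpos₂ t ⟨h, ht.2⟩)
  rw [real_inner_smul_left]
  positivity
end

section
/- Fenchel's theorem: the total curvature of any closed smooth space curve is at least 2π; that is, for a closed unit-speed curve γ : [a,b] → ℝ³ with γ(a) = γ(b) and γ'(a) = γ'(b), one has ∫_a^b |γ''(s)| ds ≥ 2π. -/
/-!
The unit tangent `T = γ'` is a curve on the unit sphere of length `L = ∫ ‖γ''‖`, and the angle
between two of its values is at most the length of the arc of `T` joining them. If `L < 2π`, cut
`T` at a parameter `c` into two arcs of length `L / 2 < π`, both joining `p = T a = T b` to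
`q = T c`. Every `T s` lies on one of them, so `∠(T s, p) + ∠(T s, q) < π`, which forces
`⟪T s, p + q⟫ > 0`. But `⟪γ, p + q⟫` takes the same value at `a` and `b`, so by Rolle's theorem
its derivative `⟪T s, p + q⟫` vanishes somewhere.
-/

open Set Real Filter Topology MeasureTheory InnerProductGeometry RealInnerProductSpace
  intervalIntegral

/-- The left side is the derivative of `arccos (f / r)` at a point where `f = c` and `f' = d`. -/
theorem neg_one_div_sqrt_mul_div_le {c d l r : ℝ} (hr : 1 < r) (hl : 0 ≤ l) (hc : |c| ≤ 1)
    (hd : |d| ≤ l * √(1 - c ^ 2)) : -(1 / √(1 - (c / r) ^ 2)) * (d / r) ≤ l := by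
  have hr0 : 0 < r := by linarith
  have hroot : r * √(1 - (c / r) ^ 2) = √(r ^ 2 - c ^ 2) := by
    rw [← sqrt_sq hr0.le, ← sqrt_mul (sq_nonneg r), sqrt_sq hr0.le]
    congr 1; field_simp
  have hcr : c ^ 2 < r ^ 2 := by nlinarith [sq_abs c, abs_nonneg c]
  have hpos : 0 < r * √(1 - (c / r) ^ 2) := by rw [hroot]; exact sqrt_pos.2 (by linarith)
  have hle : √(1 - c ^ 2) ≤ r * √(1 - (c / r) ^ 2) := by
    rw [hroot]; exact sqrt_le_sqrt (by nlinarith)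
  calc -(1 / √(1 - (c / r) ^ 2)) * (d / r) = -d / (r * √(1 - (c / r) ^ 2)) := by
        field_simp
    _ ≤ l := by
        rw [div_le_iff₀ hpos]
        nlinarith [neg_abs_le d, mul_le_mul_of_nonneg_left hle hl]

theorem cos_add_cos_pos {α β : ℝ} (hα : 0 ≤ α) (hβ : 0 ≤ β) (h : α + β < π) :
    0 < cos α + cos β := by
  rw [cos_add_cos]
  have h₁ : 0 < cos ((α + β) / 2) := cos_pos_of_mem_Ioo ⟨by linarith, by linarith⟩
  have h₂ : 0 < cos ((α - β) / 2) := cos_pos_of_mem_Ioo ⟨by linarith, by linarith⟩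
  positivity

theorem exists_intervalIntegral_eq_half {f : ℝ → ℝ} {a b : ℝ} (hab : a ≤ b)
    (hf : IntegrableOn f (Icc a b)) :
    ∃ c ∈ Icc a b, ∫ x in a..c, f x = (∫ x in a..b, f x) / 2 ∧
      ∫ x in c..b, f x = (∫ x in a..b, f x) / 2 := by
  rw [← uIcc_of_le hab] at hf ⊢
  have hhalf : (∫ x in a..b, f x) / 2 ∈ uIcc (∫ x in a..a, f x) (∫ x in a..b, f x) := by
    rw [integral_same, mem_uIcc]
    rcases le_total 0 (∫ x in a..b, f x) with h | h
    · exact Or.inl ⟨by linarith, by linarith⟩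
    · exact Or.inr ⟨by linarith, by linarith⟩
  obtain ⟨c, hc, hc_half⟩ := intermediate_value_uIcc (continuousOn_primitive_interval hf) hhalf
  simp only at hc_half
  refine ⟨c, hc, hc_half, ?_⟩
  rw [← integral_interval_sub_left hf.intervalIntegrable
    (hf.mono_set (uIcc_subset_uIcc_left hc)).intervalIntegrable, hc_half]
  ring

section

variable {E : Type*} [NormedAddCommGroup E] [InnerProductSpace ℝ E]

theorem inner_eq_zero_of_hasDerivAt_of_norm_eq_one {T : ℝ → E} {T' : E} {u : ℝ}
    (hT : HasDerivAt T T' u) (hunit : ∀ᶠ x in 𝓝 u, ‖T x‖ = 1) : ⟪T u, T'⟫ = 0 := by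
  have hconst : HasDerivAt (‖T ·‖ ^ 2) 0 u :=
    (hasDerivAt_const u (1 : ℝ)).congr_of_eventuallyEq (hunit.mono fun x hx => by simp [hx])
  linarith [hT.norm_sq.unique hconst]

theorem abs_inner_le_norm_mul_sqrt_one_sub_sq {x y v : E} (hx : ‖x‖ = 1) (hy : ‖y‖ = 1)
    (hxv : ⟪x, v⟫ = 0) : |⟪y, v⟫| ≤ ‖v‖ * √(1 - ⟪x, y⟫ ^ 2) := by
  set w := y - ⟪x, y⟫ • x
  have hw : ‖w‖ = √(1 - ⟪x, y⟫ ^ 2) := by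
    rw [← sqrt_sq (norm_nonneg w), norm_sub_sq_real, real_inner_smul_right, norm_smul, hx, hy,
      real_inner_comm, Real.norm_eq_abs]
    ring_nf; rw [sq_abs]; ring_nf
  have hvw : ⟪y, v⟫ = ⟪w, v⟫ := by
    rw [inner_sub_left, real_inner_smul_left, hxv, mul_zero, sub_zero]
  rw [hvw, ← hw, mul_comm]
  exact abs_real_inner_le_norm w v

theorem inner_add_pos_of_angle_add_angle_lt_pi {x p q : E} (hx : x ≠ 0) (hp : ‖p‖ = 1)
    (hq : ‖q‖ = 1) (h : angle x p + angle x q < π) : 0 < ⟪x, p + q⟫ := by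
  have hcos := cos_add_cos_pos (angle_nonneg x p) (angle_nonneg x q) h
  rw [inner_add_right, ← cos_angle_mul_norm_mul_norm x p, ← cos_angle_mul_norm_mul_norm x q, hp,
    hq]
  nlinarith [norm_pos_iff.2 hx]

theorem exists_hasDerivAt_arccos_inner_div_le {T : ℝ → E} {T' : E} {u r : ℝ} {y : E}
    (hy : ‖y‖ = 1) (hr : 1 < r) (hT : HasDerivAt T T' u) (hunit : ∀ᶠ x in 𝓝 u, ‖T x‖ = 1) :
    ∃ g', HasDerivAt (fun x => arccos (⟪y, T x⟫ / r)) g' u ∧ g' ≤ ‖T'‖ := by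
  have hTu : ‖T u‖ = 1 := hunit.self_of_nhds
  have hc : |⟪y, T u⟫| ≤ 1 := (abs_real_inner_le_norm y (T u)).trans (by rw [hy, hTu, one_mul])
  have hcr : |⟪y, T u⟫ / r| < 1 := by
    rw [abs_div, abs_of_pos (zero_lt_one.trans hr), div_lt_one (zero_lt_one.trans hr)]
    linarith
  have hinner : HasDerivAt (fun x => ⟪y, T x⟫) ⟪y, T'⟫ u := by
    simpa using (hasDerivAt_const u y).inner ℝ hT
  refine ⟨_, HasDerivAt.comp (h₂ := arccos) u
    (hasDerivAt_arccos (abs_lt.1 hcr).1.ne' (abs_lt.1 hcr).2.ne) (hinner.div_const r), ?_⟩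
  refine neg_one_div_sqrt_mul_div_le hr (norm_nonneg _) hc ?_
  rw [real_inner_comm (T u) y]
  exact abs_inner_le_norm_mul_sqrt_one_sub_sq hTu hy
    (inner_eq_zero_of_hasDerivAt_of_norm_eq_one hT hunit)

structure IsSphericalCurveOn (T T' : ℝ → E) (s t : ℝ) : Prop where
  continuousOn : ContinuousOn T (Icc s t)
  hasDerivAt : ∀ u ∈ Ioo s t, HasDerivAt T (T' u) u
  integrableOn_norm_deriv : IntegrableOn (fun u => ‖T' u‖) (Icc s t)
  norm_eq_one : ∀ u ∈ Icc s t, ‖T u‖ = 1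

namespace IsSphericalCurveOn

variable {T T' : ℝ → E} {a b s t : ℝ}

theorem mono (h : IsSphericalCurveOn T T' a b) (has : a ≤ s) (htb : t ≤ b) :
    IsSphericalCurveOn T T' s t where
  continuousOn := h.continuousOn.mono (Icc_subset_Icc has htb)
  hasDerivAt u hu := h.hasDerivAt u (Ioo_subset_Ioo has htb hu)
  integrableOn_norm_deriv := h.integrableOn_norm_deriv.mono_set (Icc_subset_Icc has htb)
  norm_eq_one u hu := h.norm_eq_one u (Icc_subset_Icc has htb hu)

/-- Since `arccos` is not differentiable at `±1`, the inner product with the starting point is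
first divided by some `r > 1`, and then `r → 1`. -/
theorem angle_le_integral_norm_deriv (h : IsSphericalCurveOn T T' s t) (hst : s ≤ t) :
    angle (T s) (T t) ≤ ∫ u in s..t, ‖T' u‖ := by
  have hs : ‖T s‖ = 1 := h.norm_eq_one s (left_mem_Icc.2 hst)
  have ht : ‖T t‖ = 1 := h.norm_eq_one t (right_mem_Icc.2 hst)
  have hbound : ∀ r ∈ Ioi (1 : ℝ),
      arccos (⟪T s, T t⟫ / r) - arccos (1 / r) ≤ ∫ u in s..t, ‖T' u‖ := by
    intro r hr
    have hslope : ∀ u ∈ Ioo s t, ∃ g', HasDerivAt (fun x => arccos (⟪T s, T x⟫ / r)) g' u ∧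
        g' ≤ ‖T' u‖ := fun u hu =>
      exists_hasDerivAt_arccos_inner_div_le hs hr (h.hasDerivAt u hu)
        (eventually_of_mem (Ioo_mem_nhds hu.1 hu.2) fun x hx =>
          h.norm_eq_one x (Ioo_subset_Icc_self hx))
    choose! g' hg' hg'_le using hslope
    have hcont : ContinuousOn (fun x => arccos (⟪T s, T x⟫ / r)) (Icc s t) :=
      continuous_arccos.comp_continuousOn ((continuousOn_const.inner h.continuousOn).div_const r)
    have hFTC := sub_le_integral_of_hasDeriv_right_of_le hst hcont
      (fun u hu => (hg' u hu).hasDerivWithinAt) h.integrableOn_norm_deriv hg'_le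
    rwa [real_inner_self_eq_norm_sq, hs, one_pow] at hFTC
  have hlim : Tendsto (fun r => arccos (⟪T s, T t⟫ / r) - arccos (1 / r)) (𝓝[>] 1)
      (𝓝 (angle (T s) (T t))) := by
    have hcont : ContinuousAt (fun r => arccos (⟪T s, T t⟫ / r) - arccos (1 / r)) 1 := by
      fun_prop (disch := norm_num)
    simpa [angle, hs, ht] using hcont.tendsto.mono_left nhdsWithin_le_nhds
  exact le_of_tendsto hlim (eventually_nhdsWithin_of_forall hbound)

theorem angle_add_angle_le_integral_norm_deriv (h : IsSphericalCurveOn T T' a b)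
    (hs : s ∈ Icc a b) :
    angle (T s) (T a) + angle (T s) (T b) ≤ ∫ u in a..b, ‖T' u‖ := by
  have hleft := h.mono le_rfl hs.2
  have hright := h.mono hs.1 le_rfl
  rw [angle_comm, ← integral_add_adjacent_intervals
    ((intervalIntegrable_iff_integrableOn_Icc_of_le hs.1).2 hleft.integrableOn_norm_deriv)
    ((intervalIntegrable_iff_integrableOn_Icc_of_le hs.2).2 hright.integrableOn_norm_deriv)]
  exact add_le_add (hleft.angle_le_integral_norm_deriv hs.1)
    (hright.angle_le_integral_norm_deriv hs.2)

end IsSphericalCurveOn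

theorem exists_inner_deriv_eq_zero {γ γ' : ℝ → E} {a b : ℝ} (hab : a < b)
    (hγ : ContinuousOn γ (Icc a b)) (hd : ∀ t ∈ Ioo a b, HasDerivAt γ (γ' t) t) (hc : γ a = γ b)
    (v : E) : ∃ t ∈ Ioo a b, ⟪γ' t, v⟫ = 0 :=
  exists_hasDerivAt_eq_zero hab (hγ.inner continuousOn_const) (by rw [hc])
    fun t ht => by simpa using (hd t ht).inner ℝ (hasDerivAt_const t v)

end

/-- Fenchel's theorem: the total curvature of a closed smooth space curve is at least `2π`.
For a closed unit-speed curve `γ : [a,b] → ℝ³` with `γ a = γ b` and `γ' a = γ' b`,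
one has `∫_a^b ‖γ''(s)‖ ds ≥ 2π`. -/
theorem fenchel_theorem
    (a b : ℝ) (hab : a < b)
    (γ γ' γ'' : ℝ → EuclideanSpace ℝ (Fin 3))
    (hd1 : ∀ t ∈ Icc a b, HasDerivWithinAt γ (γ' t) (Icc a b) t)
    (hd2 : ∀ t ∈ Icc a b, HasDerivWithinAt γ' (γ'' t) (Icc a b) t)
    (hcont : ContinuousOn γ'' (Icc a b))
    (hunit : ∀ t ∈ Icc a b, ‖γ' t‖ = 1)
    (hc : γ a = γ b) (hc' : γ' a = γ' b) :
    2 * Real.pi ≤ ∫ s in a..b, ‖γ'' s‖ := by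
  have hderiv : ∀ {f f' : ℝ → EuclideanSpace ℝ (Fin 3)},
      (∀ t ∈ Icc a b, HasDerivWithinAt f (f' t) (Icc a b) t) →
        ∀ t ∈ Ioo a b, HasDerivAt f (f' t) t :=
    fun hf t ht => (hf t (Ioo_subset_Icc_self ht)).hasDerivAt (Icc_mem_nhds ht.1 ht.2)
  have hT : IsSphericalCurveOn γ' γ'' a b :=
    ⟨fun t ht => (hd2 t ht).continuousWithinAt, hderiv hd2, hcont.norm.integrableOn_Icc, hunit⟩
  obtain ⟨c, hc_mem, hleft, hright⟩ :=
    exists_intervalIntegral_eq_half hab.le hT.integrableOn_norm_deriv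
  by_contra! hL
  have hpos : ∀ s ∈ Icc a b, 0 < ⟪γ' s, γ' a + γ' c⟫ := by
    intro s hs
    refine inner_add_pos_of_angle_add_angle_lt_pi (norm_ne_zero_iff.1 (by simp [hunit s hs]))
      (hunit a (left_mem_Icc.2 hab.le)) (hunit c hc_mem) ?_
    rcases le_total s c with hsc | hcs
    · have := (hT.mono le_rfl hc_mem.2).angle_add_angle_le_integral_norm_deriv ⟨hs.1, hsc⟩
      linarith
    · have := (hT.mono hc_mem.1 le_rfl).angle_add_angle_le_integral_norm_deriv ⟨hcs, hs.2⟩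
      rw [← hc'] at this
      linarith
  obtain ⟨t, ht, hzero⟩ := exists_inner_deriv_eq_zero hab
    (fun t ht => (hd1 t ht).continuousWithinAt) (hderiv hd1) hc (γ' a + γ' c)
  exact (hpos t (Ioo_subset_Icc_self ht)).ne' hzero
end

section
/- DNA theorem for polygons: for any closed polygon p₁…p_n contained in the closed unit ball of ℝ³, the total curvature (the sum of the exterior angles at the vertices) is strictly greater than the perimeter of the polygon. -/
open RealInnerProductSpace

open InnerProductGeometry in
/-- Chord is strictly shorter than arc: for distinct unit vectors, `‖u - v‖ < angle u v`. -/
lemma chord_lt_angle_aux {V : Type*} [NormedAddCommGroup V] [InnerProductSpace ℝ V]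
    {u v : V} (hu : ‖u‖ = 1) (hv : ‖v‖ = 1) (huv : u ≠ v) :
    ‖u - v‖ < angle u v := by
  have hθ0 : angle u v ≠ 0 := by
    intro h
    obtain ⟨-, r, hr, hv'⟩ := angle_eq_zero_iff.mp h
    have : ‖v‖ = r * ‖u‖ := by rw [hv', norm_smul, Real.norm_eq_abs, abs_of_pos hr]
    rw [hu, hv] at this
    have hr1 : r = 1 := by linarith
    apply huv
    rw [hv', hr1, one_smul]
  have hcos : Real.cos (angle u v) = ⟪u, v⟫ := by
    rw [cos_angle, hu, hv]; ring
  have hsq : ‖u - v‖ ^ 2 = 2 - 2 * ⟪u, v⟫ := by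
    rw [← real_inner_self_eq_norm_sq, inner_sub_sub_self,
      real_inner_self_eq_norm_sq, real_inner_self_eq_norm_sq, hu, hv,
      real_inner_comm v u]
    ring
  have hbound : 1 - (angle u v) ^ 2 / 2 < Real.cos (angle u v) :=
    Real.one_sub_sq_div_two_lt_cos hθ0
  have h2 : ‖u - v‖ ^ 2 < (angle u v) ^ 2 := by
    rw [hsq, ← hcos]; nlinarith
  exact lt_of_pow_lt_pow_left₀ 2 (angle_nonneg u v) h2

open InnerProductGeometry in
lemma chord_le_angle_aux {V : Type*} [NormedAddCommGroup V] [InnerProductSpace ℝ V]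
    {u v : V} (hu : ‖u‖ = 1) (hv : ‖v‖ = 1) :
    ‖u - v‖ ≤ angle u v := by
  rcases eq_or_ne u v with rfl | h
  · simpa using angle_nonneg u u
  · exact (chord_lt_angle_aux hu hv h).le

/-- DNA theorem for polygons: for any closed polygon `p₀ … p_{n-1}` (indices cyclic)
contained in the closed unit ball of `ℝ³` with consecutive vertices distinct, the total
curvature (the sum of the exterior angles at the vertices) is strictly greater than the
perimeter. -/
theorem dna_theorem_polygon
    (n : ℕ) [NeZero n]
    (p : ZMod n → EuclideanSpace ℝ (Fin 3))
    (hdist : ∀ i, p i ≠ p (i + 1))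
    (hball : ∀ i, ‖p i‖ ≤ 1) :
    ∑ i : ZMod n, ‖p (i + 1) - p i‖ <
      ∑ i : ZMod n, InnerProductGeometry.angle (p i - p (i - 1)) (p (i + 1) - p i) := by
  set e : ZMod n → EuclideanSpace ℝ (Fin 3) := fun i => p (i + 1) - p i with he_def
  have he : ∀ i, e i ≠ 0 := fun i => sub_ne_zero.mpr (hdist i).symm
  have hepos : ∀ i, (0:ℝ) < ‖e i‖ := fun i => norm_pos_iff.mpr (he i)
  set t : ZMod n → EuclideanSpace ℝ (Fin 3) := fun i => ‖e i‖⁻¹ • e i with ht_def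
  have ht : ∀ i, ‖t i‖ = 1 := by
    intro i
    rw [ht_def]
    simp only [norm_smul, norm_inv, norm_norm]
    exact inv_mul_cancel₀ (hepos i).ne'
  have hsmul : ∀ i, e i = ‖e i‖ • t i := by
    intro i
    rw [ht_def, smul_smul, mul_inv_cancel₀ (hepos i).ne', one_smul]
  -- the exterior angle equals the angle between consecutive unit tangents
  have hang : ∀ i : ZMod n,
      InnerProductGeometry.angle (p i - p (i - 1)) (p (i + 1) - p i)
        = InnerProductGeometry.angle (t (i - 1)) (t i) := by
    intro i
    have h1 : p i - p (i - 1) = e (i - 1) := by rw [he_def]; simp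
    rw [h1, he_def, ht_def]
    rw [InnerProductGeometry.angle_smul_left_of_pos _ _ (inv_pos.mpr (hepos (i - 1))),
      InnerProductGeometry.angle_smul_right_of_pos _ _ (inv_pos.mpr (hepos i))]
  -- perimeter rewriting
  have hlen : ∀ i, ‖e i‖ = ⟪e i, t i⟫ := by
    intro i
    show ‖e i‖ = ⟪e i, ‖e i‖⁻¹ • e i⟫
    rw [real_inner_smul_right, real_inner_self_eq_norm_sq,
      pow_two, ← mul_assoc, inv_mul_cancel₀ (hepos i).ne', one_mul]
  have hshift : ∀ f : ZMod n → ℝ, ∑ i : ZMod n, f (i + 1) = ∑ i : ZMod n, f i := by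
    intro f
    exact Fintype.sum_equiv (Equiv.addRight (1 : ZMod n)) _ _ (fun i => rfl)
  have hperim : ∑ i : ZMod n, ‖e i‖ = ∑ i : ZMod n, ⟪p i, t (i - 1) - t i⟫ := by
    calc ∑ i : ZMod n, ‖e i‖
        = ∑ i : ZMod n, (⟪p (i + 1), t i⟫ - ⟪p i, t i⟫) := by
          refine Finset.sum_congr rfl fun i _ => ?_
          rw [hlen i, he_def, inner_sub_left]
      _ = ∑ i : ZMod n, ⟪p (i + 1), t i⟫ - ∑ i : ZMod n, ⟪p i, t i⟫ := by
          rw [Finset.sum_sub_distrib]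
      _ = ∑ i : ZMod n, ⟪p i, t (i - 1)⟫ - ∑ i : ZMod n, ⟪p i, t i⟫ := by
          congr 1
          have := hshift (fun j => ⟪p j, t (j - 1)⟫)
          rw [← this]
          refine Finset.sum_congr rfl fun i _ => ?_
          simp
      _ = ∑ i : ZMod n, ⟪p i, t (i - 1) - t i⟫ := by
          rw [← Finset.sum_sub_distrib]
          refine Finset.sum_congr rfl fun i _ => ?_
          rw [inner_sub_right]
  -- pointwise bound
  have hle : ∀ i : ZMod n, ⟪p i, t (i - 1) - t i⟫ ≤ ‖t (i - 1) - t i‖ := by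
    intro i
    calc ⟪p i, t (i - 1) - t i⟫ ≤ ‖p i‖ * ‖t (i - 1) - t i‖ := real_inner_le_norm _ _
      _ ≤ 1 * ‖t (i - 1) - t i‖ := by
          exact mul_le_mul_of_nonneg_right (hball i) (norm_nonneg _)
      _ = ‖t (i - 1) - t i‖ := one_mul _
  have hweak : ∀ i : ZMod n,
      ⟪p i, t (i - 1) - t i⟫ ≤ InnerProductGeometry.angle (t (i - 1)) (t i) :=
    fun i => (hle i).trans (chord_le_angle_aux (ht _) (ht _))
  have hsum0 : ∑ i : ZMod n, e i = 0 := by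
    rw [he_def]
    simp only
    rw [Finset.sum_sub_distrib, sub_eq_zero]
    exact Fintype.sum_equiv (Equiv.addRight (1 : ZMod n)) _ _ (fun i => rfl)
  have hex : ∃ i : ZMod n, t (i - 1) ≠ t i := by
    by_contra h
    push_neg at h
    have hconst : ∀ i : ZMod n, t i = t 0 := by
      have hk : ∀ k : ℕ, t (k : ZMod n) = t 0 := by
        intro k
        induction k with
        | zero => simp
        | succ m ih =>
          have := h ((m : ZMod n) + 1)
          rw [add_sub_cancel_right] at this
          rw [Nat.cast_succ, ← this, ih]
      intro i
      obtain ⟨k, rfl⟩ := ZMod.natCast_zmod_surjective i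
      exact hk k
    have hsum : ∑ i : ZMod n, e i = (∑ i : ZMod n, ‖e i‖) • t 0 := by
      rw [Finset.sum_smul]
      refine Finset.sum_congr rfl fun i _ => ?_
      conv_lhs => rw [hsmul i]
      rw [hconst i]
    rw [hsum0] at hsum
    have hL : (0:ℝ) < ∑ i : ZMod n, ‖e i‖ :=
      Finset.sum_pos (fun i _ => hepos i) Finset.univ_nonempty
    have : t 0 = 0 := by
      have := hsum.symm
      exact (smul_eq_zero.mp this).resolve_left hL.ne'
    have h1 := ht 0
    rw [this, norm_zero] at h1
    norm_num at h1
  obtain ⟨i₀, hi₀⟩ := hex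
  have hstrict : ⟪p i₀, t (i₀ - 1) - t i₀⟫ < InnerProductGeometry.angle (t (i₀ - 1)) (t i₀) :=
    (hle i₀).trans_lt (chord_lt_angle_aux (ht _) (ht _) hi₀)
  calc ∑ i : ZMod n, ‖p (i + 1) - p i‖
      = ∑ i : ZMod n, ⟪p i, t (i - 1) - t i⟫ := hperim
    _ < ∑ i : ZMod n, InnerProductGeometry.angle (t (i - 1)) (t i) :=
        Finset.sum_lt_sum (fun i _ => hweak i) ⟨i₀, Finset.mem_univ i₀, hstrict⟩
    _ = ∑ i : ZMod n, InnerProductGeometry.angle (p i - p (i - 1)) (p (i + 1) - p i) := by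
        refine Finset.sum_congr rfl fun i _ => (hang i).symm
end

section
/- Spiral (Tait–Kneser) lemma, nesting of osculating circles: let γ be a smooth unit-speed plane curve with positive strictly decreasing curvature, with center of curvature ω(s) = γ(s) + r(s)·N(s) and radius of curvature r(s) = 1/k(s). Then for any s₀ < s₁ one has |ω(s₁) − ω(s₀)| < r(s₁) − r(s₀); in particular the closed disk bounded by the osculating circle at s₀ lies inside the open disk bounded by the osculating circle at s₁. -/
/-!
The center of curvature `ω = γ + r • N` (with `N = rot2 T`, `r = 1/k`) has velocity
`ω' = r' • N`: the term `γ' = T` cancels against `r • N' = -r k • T`. Since `N` is a unit vector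
and `r' ≥ 0`, the curve `ω` has length `r s₁ - r s₀` on `[s₀, s₁]`, which bounds
`|ω s₁ - ω s₀|`. Equality would force `N = u` wherever `r' ≠ 0`, for the unit vector `u` along
`ω s₁ - ω s₀`; but `N' = -k • T ≠ 0`, so `N` takes the value `u` only at isolated times, and `r'`
would vanish on an interval, contradicting the strict monotonicity of `r`.
-/

open Set Filter Topology RealInnerProductSpace

noncomputable def toE2 (v : Fin 2 → ℝ) : EuclideanSpace ℝ (Fin 2) :=
  (WithLp.equiv 2 (Fin 2 → ℝ)).symm v

noncomputable def rot2 (v : EuclideanSpace ℝ (Fin 2)) : EuclideanSpace ℝ (Fin 2) :=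
  toE2 ![-(v 1), v 0]

section StrictMeanValue

variable {E : Type*} [NormedAddCommGroup E] [InnerProductSpace ℝ E]
  {ω N N' : ℝ → E} {r r' : ℝ → ℝ} {a b : ℝ}

lemma HasDerivAt.nonneg_of_monotoneOn_of_mem_nhds {s : Set ℝ} {t r'₀ : ℝ}
    (hr : HasDerivAt r r'₀ t) (hs : s ∈ 𝓝 t) (hmono : MonotoneOn r s) : 0 ≤ r'₀ :=
  hr.hasDerivWithinAt.nonneg_of_monotoneOn
    (accPt_iff_frequently_nhdsNE.2 (eventually_nhdsWithin_of_eventually_nhds hs).frequently)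
    hmono

lemma StrictMonoOn.not_eventually_hasDerivAt_zero {s : Set ℝ} {m : ℝ}
    (hmono : StrictMonoOn r s) (hs : s ∈ 𝓝[>] m) : ¬ ∀ᶠ t in 𝓝[>] m, HasDerivAt r 0 t := by
  intro h
  obtain ⟨e, hme : m < e, he⟩ := mem_nhdsGT_iff_exists_Ioo_subset.1 (inter_mem h hs)
  have hx : (2 * m + e) / 3 ∈ Ioo m e := ⟨by linarith, by linarith⟩
  have hy : (m + 2 * e) / 3 ∈ Ioo m e := ⟨by linarith, by linarith⟩
  refine (hmono (he hx).2 (he hy).2 (by linarith)).ne ?_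
  exact isOpen_Ioo.is_const_of_deriv_eq_zero isPreconnected_Ioo
    (fun t ht => (he ht).1.differentiableAt.differentiableWithinAt)
    (fun t ht => (he ht).1.deriv) hx hy

lemma HasDerivAt.sub_inner_of_smul {t ρ' : ℝ} {n : E} (hω : HasDerivAt ω (ρ' • n) t)
    (hr : HasDerivAt r ρ' t) (u : E) :
    HasDerivAt (fun t => r t - ⟪ω t, u⟫) (ρ' * (1 - ⟪n, u⟫)) t := by
  refine (hr.sub (hω.inner ℝ (hasDerivAt_const t u))).congr_deriv ?_
  rw [inner_zero_right, zero_add, real_inner_smul_left]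
  ring

lemma monotoneOn_sub_inner_of_hasDerivAt_smul
    (hω : ∀ t ∈ Icc a b, HasDerivAt ω (r' t • N t) t)
    (hr : ∀ t ∈ Icc a b, HasDerivAt r (r' t) t) (hmono : MonotoneOn r (Icc a b))
    (hN : ∀ t ∈ Ioo a b, ‖N t‖ ≤ 1) {u : E} (hu : ‖u‖ ≤ 1) :
    MonotoneOn (fun t => r t - ⟪ω t, u⟫) (Icc a b) := by
  have hg := fun t ht => (hω t ht).sub_inner_of_smul (hr t ht) u
  refine monotoneOn_of_deriv_nonneg (convex_Icc a b)
    (fun t ht => (hg t ht).continuousAt.continuousWithinAt)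
    (fun t ht => (hg t (interior_subset ht)).differentiableAt.differentiableWithinAt)
    (fun t ht => ?_)
  rw [interior_Icc] at ht
  rw [(hg t (Ioo_subset_Icc_self ht)).deriv]
  have hNu : ⟪N t, u⟫ ≤ 1 := (real_inner_le_norm _ _).trans
    (mul_le_one₀ (hN t ht) (norm_nonneg _) hu)
  exact mul_nonneg ((hr t (Ioo_subset_Icc_self ht)).nonneg_of_monotoneOn_of_mem_nhds
    (Icc_mem_nhds ht.1 ht.2) hmono) (sub_nonneg.2 hNu)

theorem norm_sub_lt_sub_of_hasDerivAt_smul (hab : a < b)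
    (hω : ∀ t ∈ Icc a b, HasDerivAt ω (r' t • N t) t)
    (hr : ∀ t ∈ Icc a b, HasDerivAt r (r' t) t) (hmono : StrictMonoOn r (Icc a b))
    (hN : ∀ t ∈ Ioo a b, ‖N t‖ = 1) (hN' : ∀ t ∈ Ioo a b, HasDerivAt N (N' t) t)
    (hN'0 : ∀ t ∈ Ioo a b, N' t ≠ 0) :
    ‖ω b - ω a‖ < r b - r a := by
  have hra : r a < r b := hmono (left_mem_Icc.2 hab.le) (right_mem_Icc.2 hab.le) hab
  rcases eq_or_ne (ω b - ω a) 0 with h0 | h0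
  · rw [h0, norm_zero]; linarith
  set u := ‖ω b - ω a‖⁻¹ • (ω b - ω a)
  have hu : ‖u‖ = 1 := norm_smul_inv_norm h0
  set g := fun t => r t - ⟪ω t, u⟫
  have hg_mono : MonotoneOn g (Icc a b) := monotoneOn_sub_inner_of_hasDerivAt_smul hω hr
    hmono.monotoneOn (fun t ht => (hN t ht).le) hu.le
  have hgab : g b - g a = r b - r a - ‖ω b - ω a‖ := by
    have : ⟪ω b - ω a, u⟫ = ‖ω b - ω a‖ := by
      rw [real_inner_smul_right, real_inner_self_eq_norm_sq]
      field_simp [norm_ne_zero_iff.2 h0]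
    simp only [g, ← this, inner_sub_left]
    ring
  by_contra! hle
  have hconst : ∀ t ∈ Icc a b, g t = g a := fun t ht =>
    le_antisymm (by linarith [hg_mono ht (right_mem_Icc.2 hab.le) ht.2])
      (hg_mono (left_mem_Icc.2 hab.le) ht ht.1)
  have hN_eq : ∀ t ∈ Ioo a b, r' t ≠ 0 → N t = u := fun t ht hr't => by
    have hg0 : HasDerivAt g 0 t := (hasDerivAt_const t (g a)).congr_of_eventuallyEq <|
      eventually_of_mem (Ioo_mem_nhds ht.1 ht.2) fun s hs => hconst s (Ioo_subset_Icc_self hs)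
    have := ((hω t (Ioo_subset_Icc_self ht)).sub_inner_of_smul
      (hr t (Ioo_subset_Icc_self ht)) u).unique hg0
    rw [mul_eq_zero, sub_eq_zero] at this
    exact (inner_eq_one_iff_of_norm_eq_one (hN t ht) hu).1 (this.resolve_left hr't).symm
  -- `N' ≠ 0` keeps `N` away from `u` just to the right of the midpoint, so `r' = 0` there.
  have hm : (a + b) / 2 ∈ Ioo a b := ⟨by linarith, by linarith⟩
  refine hmono.not_eventually_hasDerivAt_zero
    (mem_nhdsWithin_of_mem_nhds (Icc_mem_nhds hm.1 hm.2)) ?_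
  filter_upwards [nhdsGT_le_nhdsNE _ ((hN' _ hm).eventually_ne (hN'0 _ hm) (c := u)),
    Ioo_mem_nhdsGT hm.2] with t hNt ht
  have ht' : t ∈ Ioo a b := ⟨hm.1.trans ht.1, ht.2⟩
  have hr't : r' t = 0 := by_contra fun h => hNt (hN_eq t ht' h)
  simpa [hr't] using hr t (Ioo_subset_Icc_self ht')

end StrictMeanValue

lemma rot2_apply_zero (v : EuclideanSpace ℝ (Fin 2)) : rot2 v 0 = -v 1 := rfl

lemma rot2_apply_one (v : EuclideanSpace ℝ (Fin 2)) : rot2 v 1 = v 0 := rfl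

lemma rot2_add (v w : EuclideanSpace ℝ (Fin 2)) : rot2 (v + w) = rot2 v + rot2 w := by
  ext i; fin_cases i <;> simp [rot2_apply_zero, rot2_apply_one]; ring

lemma rot2_smul (c : ℝ) (v : EuclideanSpace ℝ (Fin 2)) : rot2 (c • v) = c • rot2 v := by
  ext i; fin_cases i <;> simp [rot2_apply_zero, rot2_apply_one]

lemma rot2_rot2 (v : EuclideanSpace ℝ (Fin 2)) : rot2 (rot2 v) = -v := by
  ext i; fin_cases i <;> simp [rot2_apply_zero, rot2_apply_one]

lemma norm_rot2 (v : EuclideanSpace ℝ (Fin 2)) : ‖rot2 v‖ = ‖v‖ := by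
  simp [EuclideanSpace.norm_eq, Fin.sum_univ_two, rot2_apply_zero, rot2_apply_one, add_comm]

noncomputable def rot2CLM : EuclideanSpace ℝ (Fin 2) →L[ℝ] EuclideanSpace ℝ (Fin 2) :=
  LinearMap.toContinuousLinearMap
    { toFun := rot2, map_add' := rot2_add, map_smul' := rot2_smul }

lemma HasDerivAt.rot2 {f : ℝ → EuclideanSpace ℝ (Fin 2)} {f' : EuclideanSpace ℝ (Fin 2)}
    {s : ℝ} (hf : HasDerivAt f f' s) :
    HasDerivAt (fun t => _root_.rot2 (f t)) (_root_.rot2 f') s :=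
  rot2CLM.hasFDerivAt.comp_hasDerivAt s hf

lemma hasDerivAt_center_of_curvature {γ T : ℝ → EuclideanSpace ℝ (Fin 2)} {k : ℝ → ℝ}
    {k' s : ℝ} (hγ : HasDerivAt γ (T s) s) (hT : HasDerivAt T (k s • rot2 (T s)) s)
    (hk : HasDerivAt k k' s) (hk0 : k s ≠ 0) :
    HasDerivAt (fun t => γ t + (k t)⁻¹ • rot2 (T t)) ((-k' / k s ^ 2) • rot2 (T s)) s := by
  refine (hγ.add ((hk.fun_inv hk0).smul hT.rot2)).congr_deriv ?_
  rw [rot2_smul, rot2_rot2, smul_smul, inv_mul_cancel₀ hk0, one_smul]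
  abel

theorem tait_kneser_spiral_lemma_general
    (I : Set ℝ) (hIc : Convex ℝ I)
    (γ T : ℝ → EuclideanSpace ℝ (Fin 2)) (k k' : ℝ → ℝ)
    (hγ : ∀ s ∈ I, HasDerivAt γ (T s) s)
    (hT : ∀ s ∈ I, ‖T s‖ = 1)
    (hTd : ∀ s ∈ I, HasDerivAt T (k s • rot2 (T s)) s)
    (hkd : ∀ s ∈ I, HasDerivAt k (k' s) s)
    (hkpos : ∀ s ∈ I, 0 < k s)
    (hkanti : StrictAntiOn k I) :
    ∀ s₀ ∈ I, ∀ s₁ ∈ I, s₀ < s₁ →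
      dist (γ s₁ + (k s₁)⁻¹ • rot2 (T s₁)) (γ s₀ + (k s₀)⁻¹ • rot2 (T s₀)) <
        (k s₁)⁻¹ - (k s₀)⁻¹ ∧
      Metric.closedBall (γ s₀ + (k s₀)⁻¹ • rot2 (T s₀)) (k s₀)⁻¹ ⊆
        Metric.ball (γ s₁ + (k s₁)⁻¹ • rot2 (T s₁)) (k s₁)⁻¹ := by
  intro s₀ hs₀ s₁ hs₁ hlt
  have hI : Icc s₀ s₁ ⊆ I := hIc.ordConnected.out hs₀ hs₁
  have hr_mono : StrictMonoOn (fun s => (k s)⁻¹) (Icc s₀ s₁) := fun a ha b hb hab =>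
    (inv_lt_inv₀ (hkpos a (hI ha)) (hkpos b (hI hb))).2 (hkanti (hI ha) (hI hb) hab)
  have hdist := norm_sub_lt_sub_of_hasDerivAt_smul hlt
    (fun s hs => hasDerivAt_center_of_curvature (hγ s (hI hs)) (hTd s (hI hs)) (hkd s (hI hs))
      (hkpos s (hI hs)).ne')
    (fun s hs => (hkd s (hI hs)).fun_inv (hkpos s (hI hs)).ne') hr_mono
    (fun s hs => by rw [norm_rot2, hT s (hI (Ioo_subset_Icc_self hs))])
    (fun s hs => (hTd s (hI (Ioo_subset_Icc_self hs))).rot2)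
    (fun s hs => by
      have hs := hI (Ioo_subset_Icc_self hs)
      rw [rot2_smul, rot2_rot2, smul_neg, neg_ne_zero]
      exact smul_ne_zero (hkpos s hs).ne'
        (norm_ne_zero_iff.1 (by rw [hT s hs]; exact one_ne_zero)))
  rw [← dist_eq_norm] at hdist
  exact ⟨hdist, Metric.closedBall_subset_ball' (by rw [dist_comm]; linarith)⟩

/-- Spiral (Tait–Kneser) lemma: for a smooth unit-speed plane curve `γ` with positive and
strictly decreasing signed curvature `k`, with centers of curvature
`ω(s) = γ(s) + r(s) • N(s)` and radii `r = 1/k`, one has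
`dist (ω s₁) (ω s₀) < r s₁ - r s₀` for `s₀ < s₁`; in particular the closed disk bounded by
the osculating circle at `s₀` lies inside the open disk bounded by the one at `s₁`. -/
theorem tait_kneser_spiral_lemma
    (I : Set ℝ) (hIo : IsOpen I) (hIc : Convex ℝ I)
    (γ T : ℝ → EuclideanSpace ℝ (Fin 2)) (k k' : ℝ → ℝ)
    (hγ : ∀ s ∈ I, HasDerivAt γ (T s) s)
    (hT : ∀ s ∈ I, ‖T s‖ = 1)
    (hTd : ∀ s ∈ I, HasDerivAt T (k s • rot2 (T s)) s)
    (hkd : ∀ s ∈ I, HasDerivAt k (k' s) s)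
    (hkpos : ∀ s ∈ I, 0 < k s)
    (hkanti : StrictAntiOn k I) :
    ∀ s₀ ∈ I, ∀ s₁ ∈ I, s₀ < s₁ →
      dist (γ s₁ + (k s₁)⁻¹ • rot2 (T s₁)) (γ s₀ + (k s₀)⁻¹ • rot2 (T s₀)) <
        (k s₁)⁻¹ - (k s₀)⁻¹ ∧
      Metric.closedBall (γ s₀ + (k s₀)⁻¹ • rot2 (T s₀)) (k s₀)⁻¹ ⊆
        Metric.ball (γ s₁ + (k s₁)⁻¹ • rot2 (T s₁)) (k s₁)⁻¹ :=
  tait_kneser_spiral_lemma_general I hIc γ T k k' hγ hT hTd hkd hkpos hkanti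
end

section
/- Liberman's lemma: if f is a smooth convex function on an open subset of the plane and t ↦ γ(t) = (x(t), y(t), z(t)) is a unit-speed geodesic on the graph z = f(x,y), then the function t ↦ z(t) is convex, i.e., z''(t) ≥ 0 for all t. -/
open Set Filter Topology InnerProductSpace

local notation "⟪" x ", " y "⟫" => @inner ℝ _ _ x y

/-- If `φ` attains a global minimum at `t₀`, has derivative `ψ` everywhere and `ψ` has
derivative `A` at `t₀`, then `A ≥ 0`. -/
lemma second_deriv_nonneg_at_min (φ ψ : ℝ → ℝ) (A t₀ : ℝ)
    (hφ : ∀ t, HasDerivAt φ (ψ t) t) (hψ : HasDerivAt ψ A t₀)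
    (hmin : ∀ t, φ t₀ ≤ φ t) : 0 ≤ A := by
  by_contra hA
  push_neg at hA
  have hψ0 : ψ t₀ = 0 := by
    have : IsLocalMin φ t₀ := Filter.Eventually.of_forall fun x => hmin x
    exact this.hasDerivAt_eq_zero (hφ t₀)
  have hslope : Tendsto (slope ψ t₀) (𝓝[≠] t₀) (𝓝 A) :=
    (hasDerivAt_iff_tendsto_slope).mp hψ
  have hslope' : Tendsto (slope ψ t₀) (𝓝[>] t₀) (𝓝 A) :=
    hslope.mono_left (nhdsWithin_mono _ (fun x hx => ne_of_gt hx))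
  have hev : ∀ᶠ t in 𝓝[>] t₀, slope ψ t₀ t < 0 :=
    hslope'.eventually_lt_const hA
  obtain ⟨u, hu, hsub⟩ := mem_nhdsGT_iff_exists_Ioc_subset.mp hev
  have hψneg : ∀ t ∈ Ioc t₀ u, ψ t < 0 := by
    intro t ht
    have h1 : slope ψ t₀ t < 0 := hsub ht
    rw [slope_def_field, hψ0, sub_zero, div_neg_iff] at h1
    rcases h1 with ⟨_, h⟩ | ⟨h, _⟩
    · linarith [ht.1]
    · exact h
  have hanti : StrictAntiOn φ (Icc t₀ u) := by
    apply strictAntiOn_of_deriv_neg (convex_Icc t₀ u)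
    · exact fun x _ => (hφ x).continuousAt.continuousWithinAt
    · intro x hx
      rw [interior_Icc] at hx
      rw [(hφ x).deriv]
      exact hψneg x ⟨hx.1, le_of_lt hx.2⟩
  have : φ u < φ t₀ :=
    hanti (left_mem_Icc.mpr (le_of_lt hu)) (right_mem_Icc.mpr (le_of_lt hu)) hu
  exact absurd (hmin u) (not_le.mpr this)

/-- Liberman's lemma: if `f` is a smooth convex function on an open subset `Ω` of the plane
and `t ↦ (c t, z t)` (with `c t ∈ Ω ⊆ ℝ²`, `z t = f (c t) ∈ ℝ`) is a unit-speed geodesic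
on the graph `z = f(x,y)` — i.e. its acceleration `(c'' t, z'' t)` is orthogonal to the
tangent plane of the graph, which amounts to `c'' t + z'' t • ∇f (c t) = 0` — then
`t ↦ z t` is convex: `z'' t ≥ 0` for all `t`. -/
theorem liberman_lemma
    (Ω : Set (EuclideanSpace ℝ (Fin 2))) (hΩ : IsOpen Ω)
    (f : EuclideanSpace ℝ (Fin 2) → ℝ)
    (hconv : ConvexOn ℝ Ω f)
    (hsmooth : ContDiffOn ℝ (⊤ : ℕ∞) f Ω)
    (c c' c'' : ℝ → EuclideanSpace ℝ (Fin 2)) (z z' z'' : ℝ → ℝ)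
    (hmem : ∀ t, c t ∈ Ω)
    (hgraph : ∀ t, z t = f (c t))
    (hc1 : ∀ t, HasDerivAt c (c' t) t)
    (hc2 : ∀ t, HasDerivAt c' (c'' t) t)
    (hz1 : ∀ t, HasDerivAt z (z' t) t)
    (hz2 : ∀ t, HasDerivAt z' (z'' t) t)
    (hunit : ∀ t, ‖c' t‖ ^ 2 + z' t ^ 2 = 1)
    (hgeo : ∀ t, c'' t + z'' t • gradient f (c t) = 0) :
    ∀ t, 0 ≤ z'' t := by
  intro t₀
  set x₀ := c t₀ with hx₀
  set v := gradient f x₀ with hv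
  -- f is differentiable at x₀
  have hdiff : DifferentiableAt ℝ f x₀ :=
    (hsmooth.contDiffAt (hΩ.mem_nhds (hmem t₀))).differentiableAt (by simp)
  -- subgradient inequality: for all y ∈ Ω, f x₀ + ⟪v, y - x₀⟫ ≤ f y
  have hsub : ∀ y ∈ Ω, f x₀ + ⟪v, y - x₀⟫ ≤ f y := by
    intro y hy
    rcases eq_or_ne y x₀ with rfl | hne
    · simp
    -- restrict to the segment
    set L : ℝ → EuclideanSpace ℝ (Fin 2) := fun s => x₀ + s • (y - x₀) with hL
    have hLconv : ConvexOn ℝ (Icc (0:ℝ) 1) (f ∘ L) := by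
      have haff : ConvexOn ℝ ((AffineMap.lineMap x₀ y : ℝ →ᵃ[ℝ] _) ⁻¹' Ω)
          (f ∘ (AffineMap.lineMap x₀ y : ℝ →ᵃ[ℝ] _)) :=
        hconv.comp_affineMap _
      have hsubset : Icc (0:ℝ) 1 ⊆ (AffineMap.lineMap x₀ y : ℝ →ᵃ[ℝ] _) ⁻¹' Ω := by
        intro s hs
        simp only [mem_preimage, AffineMap.lineMap_apply]
        have h := hconv.1 (hmem t₀) hy (by linarith [hs.1, hs.2] : (0:ℝ) ≤ 1 - s) hs.1
          (by ring : (1 - s) + s = 1)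
        have heq : s • (y -ᵥ x₀) +ᵥ x₀ = (1 - s) • c t₀ + s • y := by
          simp only [vsub_eq_sub, vadd_eq_add, hx₀]
          module
        rw [heq]
        exact h
      have heq : (f ∘ ⇑(AffineMap.lineMap x₀ y : ℝ →ᵃ[ℝ] _)) = f ∘ L := by
        funext s
        simp only [Function.comp, hL, AffineMap.lineMap_apply, vsub_eq_sub, vadd_eq_add]
        congr 1
        module
      exact heq ▸ haff.subset hsubset (convex_Icc 0 1)
    have hLderiv : HasDerivAt (f ∘ L) ⟪v, y - x₀⟫ 0 := by
      have h1 : HasDerivAt L (y - x₀) 0 := by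
        have : HasDerivAt (fun s : ℝ => s • (y - x₀)) ((1:ℝ) • (y - x₀)) 0 :=
          (hasDerivAt_id 0).smul_const (y - x₀)
        have h := this.const_add x₀
        rw [one_smul] at h
        exact h
      have hgrad : HasGradientAt f v x₀ := hdiff.hasGradientAt
      have h2 : HasFDerivAt f (toDual ℝ (EuclideanSpace ℝ (Fin 2)) v) x₀ := hasGradientAt_iff_hasFDerivAt.mp hgrad
      have h2' : HasFDerivAt f (toDual ℝ (EuclideanSpace ℝ (Fin 2)) v) (L 0) := by simpa [hL] using h2
      have := h2'.comp_hasDerivAt 0 h1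
      simpa [InnerProductSpace.toDual_apply_apply] using this
    have hslope : ⟪v, y - x₀⟫ ≤ slope (f ∘ L) 0 1 :=
      hLconv.le_slope_of_hasDerivAt (left_mem_Icc.mpr zero_le_one)
        (right_mem_Icc.mpr zero_le_one) zero_lt_one hLderiv
    rw [slope_def_field] at hslope
    have hL0 : L 0 = x₀ := by simp [hL]
    have hL1 : L 1 = y := by simp [hL]
    simp only [Function.comp, hL0, hL1] at hslope
    linarith [hslope]
  -- the auxiliary function φ
  set φ : ℝ → ℝ := fun t => z t - ⟪v, c t⟫ with hφdef
  set ψ : ℝ → ℝ := fun t => z' t - ⟪v, c' t⟫ with hψdef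
  have hφ1 : ∀ t, HasDerivAt φ (ψ t) t := by
    intro t
    have hinner : HasDerivAt (fun t => ⟪v, c t⟫) ⟪v, c' t⟫ t := by
      have := HasDerivAt.inner ℝ (hasDerivAt_const t v) (hc1 t)
      simpa using this
    exact (hz1 t).sub hinner
  have hφ2 : HasDerivAt ψ (z'' t₀ - ⟪v, c'' t₀⟫) t₀ := by
    have hinner : HasDerivAt (fun t => ⟪v, c' t⟫) ⟪v, c'' t₀⟫ t₀ := by
      have := HasDerivAt.inner ℝ (hasDerivAt_const t₀ v) (hc2 t₀)
      simpa using this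
    exact (hz2 t₀).sub hinner
  have hmin : ∀ t, φ t₀ ≤ φ t := by
    intro t
    have := hsub (c t) (hmem t)
    simp only [hφdef]
    rw [hgraph t, hgraph t₀, inner_sub_right] at *
    linarith [this]
  have key : 0 ≤ z'' t₀ - ⟪v, c'' t₀⟫ :=
    second_deriv_nonneg_at_min φ ψ _ t₀ hφ1 hφ2 hmin
  -- from the geodesic equation, c'' t₀ = -(z'' t₀) • v
  have hc'' : c'' t₀ = -(z'' t₀) • v := by
    have := hgeo t₀
    rw [add_eq_zero_iff_eq_neg] at this
    rw [this]; module
  rw [hc'', inner_smul_right, real_inner_self_eq_norm_sq] at key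
  nlinarith [sq_nonneg (‖v‖), key]
end
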